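/- arXiv:0908.0153 — 6 statements merged into one kernel-verified Lean document; each statement's English description precedes it below -/
import Mathlib

section
/- For every integer m ≥ 2, the product of 2×2 integer matrices ∏_{i=1}^{m−1} [[(−1)^i·2, 1],[1,0]] applied to the column vector (1,0)ᵀ equals (−1)^{⌊m/2⌋}·(m, 1−m)ᵀ. In particular the continued fraction [−2, 2, −2, …, (−1)^{m−1}·2] of length m−1 equals m/(1−m), which is a Schubert fraction of the torus link T(2,m) = C(m). -/
/-!
Write `M a = [[a, 1], [1, 0]]`. The factors `M (-2), M 2, M (-2), …` repeat with period two, so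
the product of `m - 1` of them is `Bⁿ` or `Bⁿ M (-2)`, where `B = M (-2) M 2 = -(1 + N)` with
`N = [[2, 2], [-2, -2]]`. Since `N² = 0`, `Bⁿ = (-1)ⁿ (1 + n N)`, and the first column of `Bⁿ`
resp. `Bⁿ M (-2)` is the claimed vector.
-/

open Matrix Function

theorem Function.Periodic.mul_nat_add_eq {α : Type*} {f : ℕ → α} {c : ℕ} (hf : Periodic f c)
    (n x : ℕ) : f (c * n + x) = f x := by
  simpa [add_comm, mul_comm] using hf.nat_mul n x

theorem List.prod_ofFn_mul_of_periodic {α : Type*} [Monoid α] {f : ℕ → α} {c : ℕ}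
    (hf : Periodic f c) (n : ℕ) :
    (List.ofFn fun i : Fin (c * n) => f i).prod = (List.ofFn fun j : Fin c => f j).prod ^ n := by
  rw [List.ofFn_mul', List.prod_flatten, List.map_ofFn, ← List.prod_replicate,
    ← List.ofFn_const]
  simp only [Function.comp_def, hf.mul_nat_add_eq]

theorem List.prod_ofFn_mul_add_of_periodic {α : Type*} [Monoid α] {f : ℕ → α} {c : ℕ}
    (hf : Periodic f c) (n r : ℕ) :
    (List.ofFn fun i : Fin (c * n + r) => f i).prod =
      (List.ofFn fun j : Fin c => f j).prod ^ n * (List.ofFn fun j : Fin r => f j).prod := by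
  rw [List.ofFn_add, List.prod_append]
  simp only [Fin.val_castLE, Fin.val_natAdd, hf.mul_nat_add_eq]
  rw [List.prod_ofFn_mul_of_periodic hf]

theorem one_add_pow_of_mul_self_eq_zero {R : Type*} [Semiring R] {a : R} (ha : a * a = 0)
    (n : ℕ) : (1 + a) ^ n = 1 + n • a := by
  induction n with
  | zero => simp
  | succ n ih =>
    rw [pow_succ, ih, add_mul, one_mul, mul_add, mul_one, smul_mul_assoc, ha, smul_zero,
      succ_nsmul]
    abel

section

variable {R : Type*} [CommRing R]

def cfMatrix (a : R) : Matrix (Fin 2) (Fin 2) R := !![a, 1; 1, 0]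

theorem periodic_cfMatrix_neg_one_pow_mul_two :
    Periodic (fun j : ℕ => cfMatrix ((-1 : R) ^ (j + 1) * 2)) 2 := by
  intro j
  simp only [show j + 2 + 1 = j + 1 + 2 by ring, pow_add, neg_one_sq, mul_one]

theorem cfMatrix_neg_two_mul_cfMatrix_two :
    cfMatrix (-2 : R) * cfMatrix 2 = -(1 + !![2, 2; -2, -2]) := by
  ext i j
  fin_cases i <;> fin_cases j <;> simp [cfMatrix] <;> ring

theorem cfMatrix_neg_two_mul_cfMatrix_two_pow (n : ℕ) :
    (cfMatrix (-2 : R) * cfMatrix 2) ^ n =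
      (-1 : R) ^ n • !![1 + 2 * (n : R), 2 * n; -2 * n, 1 - 2 * n] := by
  have hN : (!![2, 2; -2, -2] : Matrix (Fin 2) (Fin 2) R) * !![2, 2; -2, -2] = 0 := by
    ext i j
    fin_cases i <;> fin_cases j <;> simp
  rw [cfMatrix_neg_two_mul_cfMatrix_two, ← neg_one_smul R, smul_pow,
    one_add_pow_of_mul_self_eq_zero hN]
  congr 1
  ext i j
  fin_cases i <;> fin_cases j <;> simp <;> ring

end

/-- For every `m ≥ 2`, the product `∏_{i=1}^{m-1} [[(-1)^i·2, 1],[1,0]]`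
applied to `(1,0)ᵀ` equals `(-1)^⌊m/2⌋ · (m, 1-m)ᵀ`; i.e. the continued fraction
`[-2, 2, -2, …, (-1)^{m-1}·2]` of length `m-1` equals `m/(1-m)`,
a Schubert fraction of the torus link `T(2,m) = C(m)`. -/
theorem torus_link_even_continued_fraction (m : ℕ) (hm : 2 ≤ m) :
    (List.ofFn fun i : Fin (m - 1) =>
        (!![(-1) ^ ((i : ℕ) + 1) * 2, 1; 1, 0] : Matrix (Fin 2) (Fin 2) ℤ)).prod
      *ᵥ ![1, 0] = (-1) ^ (m / 2) • ![(m : ℤ), 1 - (m : ℤ)] := by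
  set f : ℕ → Matrix (Fin 2) (Fin 2) ℤ := fun j => cfMatrix ((-1) ^ (j + 1) * 2)
  have hf : Periodic f 2 := periodic_cfMatrix_neg_one_pow_mul_two
  have hblock : (List.ofFn fun j : Fin 2 => f j).prod = cfMatrix (-2) * cfMatrix 2 := by
    norm_num [List.ofFn_succ, f]
  change (List.ofFn fun i : Fin (m - 1) => f i).prod *ᵥ _ = _
  obtain ⟨n, hn | hn⟩ := Nat.even_or_odd' (m - 1)
  · obtain rfl : m = 2 * n + 1 := by omega
    rw [hn, List.prod_ofFn_mul_of_periodic hf, hblock, cfMatrix_neg_two_mul_cfMatrix_two_pow,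
      show (2 * n + 1) / 2 = n by omega]
    ext i
    fin_cases i <;> simp [add_comm]
  · obtain rfl : m = 2 * n + 2 := by omega
    rw [hn, List.prod_ofFn_mul_add_of_periodic hf, hblock, cfMatrix_neg_two_mul_cfMatrix_two_pow,
      show (2 * n + 2) / 2 = n + 1 by omega]
    ext i
    fin_cases i <;> simp [f, cfMatrix, pow_succ] <;> ring
end

section
/- Let f_m ∈ ℤ[z] be the Fibonacci polynomials, defined by f_0 = 0, f_1 = 1, f_{m+1} = z·f_m + f_{m−1}. Let R be a commutative ring and u an invertible element of R. Then for every k ≥ 0, evaluating f_{2k+1} at u − u⁻¹ gives f_{2k+1}(u − u⁻¹) = (u^{2k} + u^{−2k}) − (u^{2k−2} + u^{−(2k−2)}) + ⋯ + (−1)^k, i.e. f_{2k+1}(u − u⁻¹) = (−1)^k + Σ_{i=1}^{k} (−1)^{k−i}·(u^{2i} + u^{−2i}). (With u = t^{1/2} this is the Alexander polynomial Δ(t) of the torus knot T(2,2k+1).) -/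
open Polynomial Finset

/-- The Fibonacci polynomials `f₀ = 0`, `f₁ = 1`, `f_{m+1} = z f_m + f_{m-1}`,
over a commutative ring `R`. -/
noncomputable def fibPoly (R : Type*) [CommRing R] : ℕ → Polynomial R
  | 0 => 0
  | 1 => 1
  | (m + 2) => X * fibPoly R (m + 1) + fibPoly R m

section Aux

variable {R : Type*} [CommRing R] (u : Rˣ)

/-- `u^n` as an element of `R`, for an integer exponent `n`. -/
noncomputable def wpow (u : Rˣ) (n : ℤ) : R := ((u ^ n : Rˣ) : R)

lemma wpow_add (a b : ℤ) : wpow u (a + b) = (wpow u a : R) * wpow u b := by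
  simp [wpow, zpow_add, Units.val_mul]

lemma fib_eval_key (m : ℕ) :
    (fibPoly R m).eval ((u : R) - ((u⁻¹ : Rˣ) : R)) =
      ∑ j ∈ range m, (-1 : R) ^ j * wpow u ((m : ℤ) - 1 - 2 * j) := by
  induction m using Nat.twoStepInduction with
  | zero => simp [fibPoly]
  | one => simp [fibPoly, wpow]
  | more m ih1 ih2 =>
    have hdef : fibPoly R (m + 2) = X * fibPoly R (m + 1) + fibPoly R m := rfl
    have hsplit : ((u : R) - ((u⁻¹ : Rˣ) : R)) *
        ∑ j ∈ range (m + 1), (-1 : R) ^ j * wpow u (((m + 1 : ℕ) : ℤ) - 1 - 2 * j)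
        = (∑ j ∈ range (m + 1), (-1 : R) ^ j * wpow u (((m + 2 : ℕ) : ℤ) - 1 - 2 * j))
          - ∑ j ∈ range (m + 1), (-1 : R) ^ j * wpow u ((m : ℤ) - 1 - 2 * j) := by
      rw [sub_mul, mul_sum, mul_sum]
      congr 1
      · refine sum_congr rfl fun j hj => ?_
        have he : ((m + 2 : ℕ) : ℤ) - 1 - 2 * j = 1 + (((m + 1 : ℕ) : ℤ) - 1 - 2 * j) := by
          push_cast; ring
        have hu : (u : R) = wpow u 1 := by simp [wpow]
        rw [he, wpow_add, hu]; ring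
      · refine sum_congr rfl fun j hj => ?_
        have he : ((m : ℕ) : ℤ) - 1 - 2 * j = (-1) + (((m + 1 : ℕ) : ℤ) - 1 - 2 * j) := by
          push_cast; ring
        have hu : ((u⁻¹ : Rˣ) : R) = wpow u (-1) := by simp [wpow]
        rw [he, wpow_add, hu]; ring
    have h2 : ∑ j ∈ range (m + 2), (-1 : R) ^ j * wpow u (((m + 2 : ℕ) : ℤ) - 1 - 2 * j)
        = (∑ j ∈ range (m + 1), (-1 : R) ^ j * wpow u (((m + 2 : ℕ) : ℤ) - 1 - 2 * j))
          + (-1 : R) ^ (m + 1) * wpow u (-(m : ℤ) - 1) := by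
      rw [sum_range_succ]
      congr 2
      push_cast; ring
    have h1 : ∑ j ∈ range (m + 1), (-1 : R) ^ j * wpow u ((m : ℤ) - 1 - 2 * j)
        = (∑ j ∈ range m, (-1 : R) ^ j * wpow u ((m : ℤ) - 1 - 2 * j))
          + (-1 : R) ^ m * wpow u (-(m : ℤ) - 1) := by
      rw [sum_range_succ]
      congr 2
      ring
    rw [hdef, eval_add, eval_mul, eval_X, ih2, ih1, hsplit, h2, h1, pow_succ]
    ring

lemma sum_reindex (k : ℕ) :
    ∑ j ∈ range (2 * k + 1), (-1 : R) ^ j * wpow u (2 * (k : ℤ) - 2 * j) =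
      (-1) ^ k + ∑ i ∈ Finset.Icc 1 k,
        (-1 : R) ^ (k - i) * (wpow u (2 * i) + wpow u (-(2 * i))) := by
  induction k with
  | zero => simp [wpow]
  | succ k ih =>
    have hL : ∑ j ∈ range (2 * (k + 1) + 1), (-1 : R) ^ j * wpow u (2 * ((k + 1 : ℕ) : ℤ) - 2 * j)
        = (wpow u (2 * ((k : ℤ) + 1)) + wpow u (-(2 * ((k : ℤ) + 1))))
          - ∑ j ∈ range (2 * k + 1), (-1 : R) ^ j * wpow u (2 * (k : ℤ) - 2 * j) := by
      have h0 : 2 * (k + 1) + 1 = (2 * k + 1 + 1) + 1 := by ring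
      rw [h0, sum_range_succ, sum_range_succ']
      have h1 : ∑ j ∈ range (2 * k + 1), (-1 : R) ^ (j + 1) * wpow u (2 * ((k+1 : ℕ) : ℤ) - 2 * ((j : ℕ) + 1 : ℕ))
          = - ∑ j ∈ range (2 * k + 1), (-1 : R) ^ j * wpow u (2 * (k : ℤ) - 2 * j) := by
        rw [← Finset.sum_neg_distrib]
        refine sum_congr rfl fun j hj => ?_
        have he : (2 * ((k+1 : ℕ) : ℤ) - 2 * ((j + 1 : ℕ) : ℤ)) = 2 * (k : ℤ) - 2 * j := by
          push_cast; ring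
        rw [he, pow_succ]; ring
      rw [h1]
      have h2 : (-1 : R) ^ 0 * wpow u (2 * ((k+1:ℕ):ℤ) - 2 * ((0:ℕ):ℤ)) = wpow u (2*((k:ℤ)+1)) := by
        rw [pow_zero, one_mul]; congr 1
      have h3 : (-1 : R) ^ (2*k+1+1) * wpow u (2 * ((k+1:ℕ):ℤ) - 2 * ((2*k+1+1 : ℕ):ℤ))
          = wpow u (-(2*((k:ℤ)+1))) := by
        have he : (2 * ((k+1:ℕ):ℤ) - 2 * ((2*k+1+1 : ℕ):ℤ)) = -(2*((k:ℤ)+1)) := by push_cast; ring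
        have hp : ((-1 : R) ^ (2*k+1+1)) = 1 := Even.neg_one_pow ⟨k+1, by ring⟩
        rw [he, hp, one_mul]
      rw [h2, h3]
      ring
    have hR : ∑ i ∈ Finset.Icc 1 (k+1), (-1 : R) ^ (k + 1 - i) * (wpow u (2 * i) + wpow u (-(2 * i)))
        = (wpow u (2 * ((k : ℤ) + 1)) + wpow u (-(2 * ((k : ℤ) + 1))))
          - ∑ i ∈ Finset.Icc 1 k, (-1 : R) ^ (k - i) * (wpow u (2 * i) + wpow u (-(2 * i))) := by
      rw [Finset.sum_Icc_succ_top (by omega : 1 ≤ k + 1)]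
      have h1 : ∑ i ∈ Finset.Icc 1 k, (-1 : R) ^ (k + 1 - i) * (wpow u (2 * i) + wpow u (-(2 * i)))
          = - ∑ i ∈ Finset.Icc 1 k, (-1 : R) ^ (k - i) * (wpow u (2 * i) + wpow u (-(2 * i))) := by
        rw [← Finset.sum_neg_distrib]
        refine sum_congr rfl fun i hi => ?_
        have hik : i ≤ k := (Finset.mem_Icc.mp hi).2
        have hs : k + 1 - i = (k - i) + 1 := by omega
        rw [hs, pow_succ]; ring
      rw [h1]
      have hp : (-1:R)^(k+1-(k+1)) = 1 := by simp
      rw [hp]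
      push_cast
      ring
    rw [hL, hR, ih]
    have hp : (-1:R)^(k+1) = -(-1:R)^k := by rw [pow_succ]; ring
    rw [hp]
    ring

end Aux

/-- For a commutative ring `R`, a unit `u` of `R` and `k ≥ 0`,
`f_{2k+1}(u - u⁻¹) = (-1)^k + Σ_{i=1}^k (-1)^{k-i} (u^{2i} + u^{-2i})`.
(With `u = t^{1/2}` this is the Alexander polynomial of the torus knot `T(2,2k+1)`.) -/
theorem fibPoly_eval_unit_sub_inv (R : Type*) [CommRing R] (u : Rˣ) (k : ℕ) :
    (fibPoly R (2 * k + 1)).eval ((u : R) - ((u⁻¹ : Rˣ) : R)) =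
      (-1) ^ k + ∑ i ∈ Finset.Icc 1 k,
        (-1) ^ (k - i) * ((u : R) ^ (2 * i) + ((u⁻¹ : Rˣ) : R) ^ (2 * i)) := by
  rw [fib_eval_key]
  have h : ∑ j ∈ range (2 * k + 1), (-1 : R) ^ j * wpow u (((2 * k + 1 : ℕ) : ℤ) - 1 - 2 * j)
      = ∑ j ∈ range (2 * k + 1), (-1 : R) ^ j * wpow u (2 * (k : ℤ) - 2 * j) := by
    refine sum_congr rfl fun j hj => ?_
    congr 1
    push_cast; ring
  rw [h, sum_reindex]
  congr 1
  refine sum_congr rfl fun i hi => ?_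
  congr 1
  have h1 : wpow u (2 * (i : ℤ)) = (u : R) ^ (2 * i) := by
    simp only [wpow]
    rw [show (2 * (i : ℤ)) = ((2 * i : ℕ) : ℤ) by push_cast; ring, zpow_natCast,
      Units.val_pow_eq_pow_val]
  have h2 : wpow u (-(2 * (i : ℤ))) = ((u⁻¹ : Rˣ) : R) ^ (2 * i) := by
    simp only [wpow]
    rw [show (-(2 * (i : ℤ))) = -((2 * i : ℕ) : ℤ) by push_cast; ring, zpow_neg, zpow_natCast,
      ← inv_pow, Units.val_pow_eq_pow_val]
  rw [h1, h2]
end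

section
/- Let n = 2k+1 be an odd integer (k ≥ 0), and consider the 2×2 integer matrices P = [[n,1],[1,0]], G = [[3,2],[−2,−1]], L = [[n+1,1],[1,0]], T = [[1,1],[0,−1]]. Then L·G^k·T = P². Equivalently, as an identity of continued fractions: [n, n, x] = [n+1, −2, 2, …, −2, 2, −(1+x)] (with k pairs −2, 2) for all x. -/
lemma G_pow (k : ℕ) :
    (!![3, 2; -2, -1] : Matrix (Fin 2) (Fin 2) ℤ) ^ k =
      !![2 * (k : ℤ) + 1, 2 * k; -(2 * k), 1 - 2 * k] := by
  induction k with
  | zero => simp [Matrix.one_fin_two]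
  | succ m ih =>
      rw [pow_succ, ih]
      push_cast
      ext i j
      fin_cases i <;> fin_cases j <;>
        simp [Matrix.mul_apply, Fin.sum_univ_two] <;> ring

/-- for an odd integer `n = 2k+1` and the matrices
`P = [[n,1],[1,0]]`, `G = [[3,2],[-2,-1]]`, `L = [[n+1,1],[1,0]]`,
`T = [[1,1],[0,-1]]`, one has `L·G^k·T = P²`; i.e. the continued fraction
identity `[n, n, x] = [n+1, -2, 2, …, -2, 2, -(1+x)]` (with `k` pairs `-2, 2`). -/
theorem L_G_pow_T_eq_P_sq (k : ℕ) (n : ℤ) (hn : n = 2 * k + 1) :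
    (!![n + 1, 1; 1, 0] : Matrix (Fin 2) (Fin 2) ℤ) *
        (!![3, 2; -2, -1] : Matrix (Fin 2) (Fin 2) ℤ) ^ k *
        (!![1, 1; 0, -1] : Matrix (Fin 2) (Fin 2) ℤ) =
      (!![n, 1; 1, 0] : Matrix (Fin 2) (Fin 2) ℤ) ^ 2 := by
  subst hn
  rw [G_pow, sq]
  ext i j
  fin_cases i <;> fin_cases j <;>
    simp [Matrix.mul_apply, Fin.sum_univ_two] <;> ring
end

section
/- Let n = 2k+1 be an odd integer (k ≥ 0), and consider the 2×2 integer matrices P = [[n,1],[1,0]], G = [[3,2],[−2,−1]], L = [[n+1,1],[1,0]], Q = [[−(n+1),1],[1,0]]. Then (L·G^k)·(1,0)ᵀ = P²·(1,0)ᵀ = (n²+1, n)ᵀ, and (L·G^k·Q)·(1,0)ᵀ = −P³·(1,0)ᵀ = (−(n³+2n), −(n²+1))ᵀ. Equivalently, as identities of continued fractions: [n,n] = [n+1, −2, 2, …, −2, 2] and [n,n,n] = [n+1, −2, 2, …, −2, 2, −(n+1)] (each with k pairs −2, 2). -/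
open Matrix

lemma Gpow (k : ℕ) : (!![3, 2; -2, -1] : Matrix (Fin 2) (Fin 2) ℤ) ^ k =
    !![2*(k:ℤ)+1, 2*k; -(2*k), 1-2*k] := by
  induction k with
  | zero => simp [Matrix.one_fin_two]
  | succ m ih =>
    rw [pow_succ, ih]
    push_cast
    ext i j
    fin_cases i <;> fin_cases j <;>
      simp [Matrix.mul_apply, Fin.sum_univ_succ] <;> ring

theorem fibonacci_even_expansions (k : ℕ) (n : ℤ) (hn : n = 2 * k + 1) :
    (((!![n + 1, 1; 1, 0] : Matrix (Fin 2) (Fin 2) ℤ) *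
          (!![3, 2; -2, -1] : Matrix (Fin 2) (Fin 2) ℤ) ^ k) *ᵥ ![1, 0] =
        ((!![n, 1; 1, 0] : Matrix (Fin 2) (Fin 2) ℤ) ^ 2) *ᵥ ![1, 0] ∧
      ((!![n, 1; 1, 0] : Matrix (Fin 2) (Fin 2) ℤ) ^ 2) *ᵥ ![1, 0] =
        ![n ^ 2 + 1, n]) ∧
    ((!![n + 1, 1; 1, 0] : Matrix (Fin 2) (Fin 2) ℤ) *
          (!![3, 2; -2, -1] : Matrix (Fin 2) (Fin 2) ℤ) ^ k *
          (!![-(n + 1), 1; 1, 0] : Matrix (Fin 2) (Fin 2) ℤ)) *ᵥ ![1, 0] =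
        (-((!![n, 1; 1, 0] : Matrix (Fin 2) (Fin 2) ℤ) ^ 3)) *ᵥ ![1, 0] ∧
      (-((!![n, 1; 1, 0] : Matrix (Fin 2) (Fin 2) ℤ) ^ 3)) *ᵥ ![1, 0] =
        ![-(n ^ 3 + 2 * n), -(n ^ 2 + 1)] := by
  have hk : (k : ℤ) = (n - 1) / 2 := by omega
  rw [Gpow, show (!![n, 1; 1, 0] : Matrix (Fin 2) (Fin 2) ℤ) ^ 2
      = !![n, 1; 1, 0] * !![n, 1; 1, 0] from sq _,
    show (!![n, 1; 1, 0] : Matrix (Fin 2) (Fin 2) ℤ) ^ 3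
      = !![n, 1; 1, 0] * !![n, 1; 1, 0] * !![n, 1; 1, 0] from by rw [pow_succ, sq]]
  refine ⟨⟨?_, ?_⟩, ?_, ?_⟩ <;>
    · ext i
      fin_cases i <;>
        simp [Matrix.mulVec, Matrix.mul_apply, Fin.sum_univ_succ, dotProduct, hn] <;> ring
end

section
/- Let F_m denote the Fibonacci numbers (F_1 = F_2 = 1, F_{m+1} = F_m + F_{m−1}). For every m ≥ 1, the product of 2×2 integer matrices ∏_{i=1}^{m} ([[(−1)^{i−1}·2, 1],[1,0]])² applied to (1,0)ᵀ equals (F_{3m+2}, F_{3m})ᵀ. Equivalently, the continued fraction [2, 2, −2, −2, 2, 2, …, (−1)^{m−1}·2, (−1)^{m−1}·2] of length 2m equals F_{3m+2}/F_{3m}. -/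
/-!
Flipping the sign of every partial quotient conjugates the product by `diag(1, -1)`, so the image
of `(1, 0)` only changes the sign of its second coordinate; hence one tracks the sign `ε` of the
first factor. Since `[[2ε, 1], [1, 0]]² = [[5, 2ε], [2ε, 1]]` for `ε² = 1`, and this matrix sends
`(F_{n+2}, -ε F_n)` to `(F_{n+5}, ε F_{n+3})`, induction on `m` peels off the first factor.
-/

open Matrix

theorem Nat.fib_add_five_add_two_mul (n : ℕ) : fib (n + 5) + 2 * fib n = 5 * fib (n + 2) := by
  simp only [fib_add_two]
  omega

theorem Nat.fib_add_three_add (n : ℕ) : fib (n + 3) + fib n = 2 * fib (n + 2) := by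
  simp only [fib_add_two]
  omega

section

variable {R : Type*} [CommRing R]

theorem cf_matrix_sq_mulVec_fib {ε : R} (hε : ε * ε = 1) (n : ℕ) :
    !![ε * 2, 1; 1, 0] ^ 2 *ᵥ ![(Nat.fib (n + 2) : R), -ε * Nat.fib n] =
      ![(Nat.fib (n + 5) : R), ε * Nat.fib (n + 3)] := by
  have h5 := congrArg (Nat.cast : ℕ → R) (Nat.fib_add_five_add_two_mul n)
  have h3 := congrArg (Nat.cast : ℕ → R) (Nat.fib_add_three_add n)
  push_cast at h5 h3
  simp only [sq, mul_fin_two, cons_mulVec, empty_mulVec, vec2_dotProduct, cons_val_zero,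
    cons_val_one]
  refine vec2_eq ?_ ?_
  · linear_combination (4 * Nat.fib (n + 2) - 2 * Nat.fib n : R) * hε - h5
  · linear_combination -ε * h3

theorem alternating_cf_matrix_sq_prod_mulVec {ε : R} (hε : ε * ε = 1) (m : ℕ) :
    (List.ofFn fun i : Fin m => !![ε * (-1) ^ (i : ℕ) * 2, 1; 1, 0] ^ 2).prod *ᵥ ![1, 0] =
      ![(Nat.fib (3 * m + 2) : R), ε * Nat.fib (3 * m)] := by
  induction m generalizing ε with
  | zero => ext i; fin_cases i <;> simp
  | succ m ih =>
    have hflip : ∀ i : Fin m, ε * (-1) ^ ((i.succ : Fin (m + 1)) : ℕ) * 2 =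
        -ε * (-1) ^ (i : ℕ) * 2 := fun i => by simp [pow_succ]
    rw [List.ofFn_succ, List.prod_cons, ← mulVec_mulVec]
    simp only [hflip, ih (ε := -ε) (by simpa using hε), Fin.val_zero, pow_zero, mul_one]
    exact cf_matrix_sq_mulVec_fib hε (3 * m)

end

theorem cf_fib_ratio_F3m2_F3m_general (m : ℕ) :
    (List.ofFn fun i : Fin m =>
        ((!![(-1) ^ (i : ℕ) * 2, 1; 1, 0] : Matrix (Fin 2) (Fin 2) ℤ)) ^ 2).prod
      *ᵥ ![1, 0] = ![(Nat.fib (3 * m + 2) : ℤ), (Nat.fib (3 * m) : ℤ)] := by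
  simpa using alternating_cf_matrix_sq_prod_mulVec (R := ℤ) (one_mul 1) m

/-- for every `m ≥ 1`, the product
`∏_{i=1}^m ([[(-1)^{i-1}·2, 1],[1,0]])²` applied to `(1,0)ᵀ`
equals `(F_{3m+2}, F_{3m})ᵀ`; i.e. the continued fraction
`[2, 2, -2, -2, …, (-1)^{m-1}·2, (-1)^{m-1}·2]` of length `2m`
equals `F_{3m+2}/F_{3m}`. -/
theorem cf_fib_ratio_F3m2_F3m (m : ℕ) (hm : 1 ≤ m) :
    (List.ofFn fun i : Fin m =>
        ((!![(-1) ^ (i : ℕ) * 2, 1; 1, 0] : Matrix (Fin 2) (Fin 2) ℤ)) ^ 2).prod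
      *ᵥ ![1, 0] = ![(Nat.fib (3 * m + 2) : ℤ), (Nat.fib (3 * m) : ℤ)] :=
  cf_fib_ratio_F3m2_F3m_general m
end

section
/- Let F_m denote the Fibonacci numbers (F_1 = F_2 = 1, F_{m+1} = F_m + F_{m−1}). Let m ≥ 1 and define integers a_1, …, a_{2m} by: a_1 = 2; a_{2i} = a_{2i+1} = (−1)^i·2 for 1 ≤ i ≤ m−1; and a_{2m} = (−1)^m·2. Then (∏_{i=1}^{2m} [[a_i,1],[1,0]])·(1,0)ᵀ = (−1)^m·(F_{3m+1}, F_{3m})ᵀ. Equivalently, the continued fraction [2, −2, −2, 2, 2, …, (−1)^{m−1}·2, (−1)^{m−1}·2, (−1)^m·2] of length 2m equals F_{3m+1}/F_{3m}. -/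
/-!
Write `Φ = [[1,1],[1,0]]`, so that `Φ ^ n * (1,0)ᵀ = (F_{n+1}, F_n)ᵀ`, and `K a = [[a,1],[1,0]]`.
Grouping the `2m` factors in pairs, the product is `∏_{i<m} K(2sᵢ) K(-2sᵢ)` with `sᵢ = (-1)^i`.
The identity `diag(s,1) · K(2s) K(-2s) = Φ³ · diag(-s,1)`, valid whenever `s² = 1`, shows by
induction that this product equals `Φ^{3m} · diag(s_m, 1)`; applied to `(1,0)ᵀ` it gives
`s_m · (F_{3m+1}, F_{3m})ᵀ`.
-/

open Matrix

theorem List.prod_ofFn_two_mul {M : Type*} [Monoid M] (f : ℕ → M) (m : ℕ) :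
    (List.ofFn fun i : Fin (2 * m) => f i).prod =
      (List.ofFn fun i : Fin m => f (2 * i) * f (2 * i + 1)).prod := by
  induction m with
  | zero => simp
  | succ m ih =>
    change (List.ofFn fun i : Fin (2 * m + 1 + 1) => f i).prod = _
    simp only [List.ofFn_succ', List.prod_concat, Fin.val_castSucc, Fin.val_last, ih, mul_assoc]

section FibMatrix

variable {R : Type*} [CommRing R]

theorem fibMatrix_pow_mulVec (n : ℕ) :
    (!![1, 1; 1, 0] : Matrix (Fin 2) (Fin 2) R) ^ n *ᵥ ![1, 0] =
      ![(Nat.fib (n + 1) : R), Nat.fib n] := by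
  induction n with
  | zero => simp
  | succ n ih =>
    rw [pow_succ', ← mulVec_mulVec, ih, Nat.fib_add_two]
    ext i
    fin_cases i <;> simp [add_comm]

theorem diagonal_mul_cfMatrix_pair {s : R} (hs : s * s = 1) :
    diagonal ![s, 1] * (!![s * 2, 1; 1, 0] * !![-s * 2, 1; 1, 0]) =
      !![1, 1; 1, 0] ^ 3 * diagonal ![-s, 1] := by
  ext i j
  fin_cases i <;> fin_cases j <;> simp [pow_succ] <;> grind

theorem prod_ofFn_cfMatrix_alternating_pairs (m : ℕ) :
    (List.ofFn fun i : Fin m =>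
        (!![(-1) ^ (i : ℕ) * 2, 1; 1, 0] * !![(-1) ^ ((i : ℕ) + 1) * 2, 1; 1, 0] :
          Matrix (Fin 2) (Fin 2) R)).prod =
      !![1, 1; 1, 0] ^ (3 * m) * diagonal ![(-1) ^ m, 1] := by
  induction m with
  | zero => simp [one_fin_two, diagonal_fin_two]
  | succ m ih =>
    have hsq : (-1 : R) ^ m * (-1) ^ m = 1 := by rw [← mul_pow]; simp
    simp only [List.ofFn_succ', List.prod_concat, Fin.val_castSucc, Fin.val_last]
    rw [ih, mul_assoc, pow_succ _ m, mul_neg_one,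
      diagonal_mul_cfMatrix_pair hsq, ← mul_assoc, ← pow_add]
    rfl

end FibMatrix

theorem cf_fib_ratio_F3m1_F3m_general (m : ℕ) (a : ℕ → ℤ)
    (ha1 : a 1 = 2)
    (ha : ∀ i, 1 ≤ i → i ≤ m - 1 → a (2 * i) = (-1) ^ i * 2 ∧ a (2 * i + 1) = (-1) ^ i * 2)
    (ham : a (2 * m) = (-1) ^ m * 2) :
    (List.ofFn fun i : Fin (2 * m) =>
        (!![a ((i : ℕ) + 1), 1; 1, 0] : Matrix (Fin 2) (Fin 2) ℤ)).prod
      *ᵥ ![1, 0] =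
      (-1) ^ m • ![(Nat.fib (3 * m + 1) : ℤ), (Nat.fib (3 * m) : ℤ)] := by
  have h_odd : ∀ i < m, a (2 * i + 1) = (-1) ^ i * 2 := by
    rintro (_ | i) hi
    · exact ha1
    · exact (ha (i + 1) (by omega) (by omega)).2
  have h_even : ∀ i < m, a (2 * i + 1 + 1) = (-1) ^ (i + 1) * 2 := by
    intro i hi
    by_cases hlast : i + 1 = m
    · subst hlast; exact ham
    · exact (ha (i + 1) (by omega) (by omega)).1
  have h_pairs : (List.ofFn fun i : Fin m =>
      (!![a (2 * i + 1), 1; 1, 0] * !![a (2 * i + 1 + 1), 1; 1, 0] :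
        Matrix (Fin 2) (Fin 2) ℤ)) = List.ofFn fun i : Fin m =>
      !![(-1) ^ (i : ℕ) * 2, 1; 1, 0] * !![(-1) ^ ((i : ℕ) + 1) * 2, 1; 1, 0] := by
    congr 1
    funext i
    rw [h_odd i i.2, h_even i i.2]
  rw [List.prod_ofFn_two_mul (fun k => !![a (k + 1), 1; 1, 0]), h_pairs,
    prod_ofFn_cfMatrix_alternating_pairs, ← mulVec_mulVec]
  have h_diag : diagonal ![(-1) ^ m, 1] *ᵥ ![1, 0] = ((-1) ^ m : ℤ) • ![1, 0] := by
    ext i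
    fin_cases i <;> simp
  rw [h_diag, mulVec_smul, fibMatrix_pow_mulVec]

/-- let `m ≥ 1` and let `a_1, …, a_{2m}` be given by `a_1 = 2`,
`a_{2i} = a_{2i+1} = (-1)^i·2` for `1 ≤ i ≤ m-1`, and `a_{2m} = (-1)^m·2`.
Then `(∏_{i=1}^{2m} [[a_i,1],[1,0]])·(1,0)ᵀ = (-1)^m·(F_{3m+1}, F_{3m})ᵀ`;
i.e. the continued fraction `[2, -2, -2, 2, 2, …, (-1)^m·2]` of length `2m`
equals `F_{3m+1}/F_{3m}`. -/
theorem cf_fib_ratio_F3m1_F3m (m : ℕ) (hm : 1 ≤ m) (a : ℕ → ℤ)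
    (ha1 : a 1 = 2)
    (ha : ∀ i, 1 ≤ i → i ≤ m - 1 → a (2 * i) = (-1) ^ i * 2 ∧ a (2 * i + 1) = (-1) ^ i * 2)
    (ham : a (2 * m) = (-1) ^ m * 2) :
    (List.ofFn fun i : Fin (2 * m) =>
        (!![a ((i : ℕ) + 1), 1; 1, 0] : Matrix (Fin 2) (Fin 2) ℤ)).prod
      *ᵥ ![1, 0] =
      (-1) ^ m • ![(Nat.fib (3 * m + 1) : ℤ), (Nat.fib (3 * m) : ℤ)] :=
  cf_fib_ratio_F3m1_F3m_general m a ha1 ha ham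
end
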